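/- Let A be a cDFA over alphabet Σ with state set Q, start state q0 and transition function δ, and let D₁,…,Dₙ ⊆ Σ be nonempty finite domains. Fix i ∈ [1,n] and ℓ ∈ Dᵢ. For every domain-consistent string σ of length n with σᵢ = ℓ, letting q = run(q0, σ₁⋯σ_{i−1}) and δ(q,ℓ) = (q′,inc), the total cost satisfies preMin(i−1,q) + inc + sufMin(i+1,q′) ≤ cost(q0,σ) ≤ preMax(i−1,q) + inc + sufMax(i+1,q′). Consequently, if for every state q ∈ Q with preMin(i−1,q) ≠ ∞ the interval [preMin(i−1,q)+inc+sufMin(i+1,q′), preMax(i−1,q)+inc+sufMax(i+1,q′)] (with δ(q,ℓ) = (q′,inc)) is disjoint from a finite set D_N ⊆ ℕ, then no domain-consistent σ with σᵢ = ℓ has cost(q0,σ) ∈ D_N; i.e., the pruning rule of the incomplete cAutomaton propagator is sound. -/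

import Mathlib

/-!
Split a domain-consistent string at position `i` into the prefix before it, the letter `ℓ`
and the suffix after it. The cost is additive along this split; the prefix is one of the
strings over which `preMin`/`preMax` optimise and the suffix one of those over which
`sufMin`/`sufMax` optimise, so each of the three summands lies between its bounds. The
maxima are attained because there are only finitely many domain-consistent strings.
-/

/-- A counter-DFA over state type `Q` and alphabet `σ`: a start state and a total
transition function returning the successor state and the counter increment. -/
structure CDFA (Q : Type*) (σ : Type*) where
  q0 : Q
  δ : Q → σ → Q × ℕ

namespace CDFA

variable {Q σ : Type*}

/-- The state reached from `q` after consuming a string. -/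
def run (A : CDFA Q σ) : Q → List σ → Q
  | q, [] => q
  | q, ℓ :: w => A.run (A.δ q ℓ).1 w

/-- The total counter increase from state `q` upon consuming a string. -/
def cost (A : CDFA Q σ) : Q → List σ → ℕ
  | _, [] => 0
  | q, ℓ :: w => (A.δ q ℓ).2 + A.cost (A.δ q ℓ).1 w

end CDFA

namespace CDFA

variable {Q σ : Type*}

/-- `preMin A D i hi q` : the minimum cost (in `ℕ ∪ {∞}`) of a domain-consistent
prefix string of length `i` leading from the start state to state `q`
(`∞` if no such string reaches `q`). -/
noncomputable def preMin (A : CDFA Q σ) {n : ℕ} (D : Fin n → Finset σ)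
    (i : ℕ) (hi : i ≤ n) (q : Q) : ℕ∞ :=
  sInf {c : ℕ∞ | ∃ s : Fin i → σ, (∀ j, s j ∈ D (Fin.castLE hi j)) ∧
    A.run A.q0 (List.ofFn s) = q ∧ (A.cost A.q0 (List.ofFn s) : ℕ∞) = c}

/-- `preMax A D i hi q` : the maximum cost (in `ℕ ∪ {−∞}`) of a domain-consistent
prefix string of length `i` leading from the start state to state `q`
(`−∞` if no such string reaches `q`). -/
noncomputable def preMax (A : CDFA Q σ) {n : ℕ} (D : Fin n → Finset σ)
    (i : ℕ) (hi : i ≤ n) (q : Q) : WithBot ℕ :=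
  sSup {c : WithBot ℕ | ∃ s : Fin i → σ, (∀ j, s j ∈ D (Fin.castLE hi j)) ∧
    A.run A.q0 (List.ofFn s) = q ∧ (A.cost A.q0 (List.ofFn s) : WithBot ℕ) = c}

/-- `sufMin A D i q` : the minimum cost of a domain-consistent suffix string for
positions `i, …, n−1` (0-based), starting from state `q`. -/
noncomputable def sufMin (A : CDFA Q σ) {n : ℕ} (D : Fin n → Finset σ)
    (i : ℕ) (q : Q) : ℕ :=
  sInf {c : ℕ | ∃ s : Fin (n - i) → σ,
    (∀ j : Fin (n - i), s j ∈ D ⟨i + j.val, by have := j.isLt; omega⟩) ∧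
    A.cost q (List.ofFn s) = c}

/-- `sufMax A D i q` : the maximum cost of a domain-consistent suffix string for
positions `i, …, n−1` (0-based), starting from state `q`. -/
noncomputable def sufMax (A : CDFA Q σ) {n : ℕ} (D : Fin n → Finset σ)
    (i : ℕ) (q : Q) : ℕ :=
  sSup {c : ℕ | ∃ s : Fin (n - i) → σ,
    (∀ j : Fin (n - i), s j ∈ D ⟨i + j.val, by have := j.isLt; omega⟩) ∧
    A.cost q (List.ofFn s) = c}

end CDFA

namespace CDFA

variable {Q σ : Type*} (A : CDFA Q σ)

theorem cost_append (q : Q) (u v : List σ) :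
    A.cost q (u ++ v) = A.cost q u + A.cost (A.run q u) v := by
  induction u generalizing q with
  | nil => simp [cost, run]
  | cons a u ih => simp [cost, run, ih, add_assoc]

theorem cost_append_cons (q : Q) (u : List σ) (a : σ) (v : List σ) :
    A.cost q (u ++ a :: v) =
      A.cost q u + ((A.δ (A.run q u) a).2 + A.cost (A.δ (A.run q u) a).1 v) :=
  A.cost_append q u (a :: v)

end CDFA

theorem Set.finite_setOf_exists_forall_mem_finset {ι α β : Type*} [Finite ι]
    (E : ι → Finset α) (P : (ι → α) → Prop) (f : (ι → α) → β) :
    {b | ∃ s, (∀ j, s j ∈ E j) ∧ P s ∧ f s = b}.Finite :=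
  ((Set.Finite.pi fun j => (E j).finite_toSet).image f).subset
    fun _ ⟨s, hs, _, hb⟩ => ⟨s, fun j _ => hs j, hb⟩

theorem List.ofFn_eq_append_cons {σ : Type*} {n : ℕ} (s : Fin n → σ) (i : Fin n) :
    List.ofFn s =
      (List.ofFn fun j : Fin i.val => s (Fin.castLE i.isLt.le j)) ++
        s i :: List.ofFn fun j : Fin (n - (i.val + 1)) =>
          s ⟨i.val + 1 + j.val, by have := j.isLt; omega⟩ := by
  apply List.ext_getElem
  · simp only [List.length_ofFn, List.length_append, List.length_cons]
    omega
  · intro k _ hk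
    simp only [List.length_ofFn, List.length_append, List.length_cons] at hk
    simp only [List.getElem_ofFn, List.getElem_append, List.getElem_cons, List.length_ofFn]
    split_ifs <;> congr 1 <;> ext <;> simp <;> omega

namespace CDFA

variable {Q σ : Type*} (A : CDFA Q σ) {n : ℕ} (D : Fin n → Finset σ)

section Prefix

variable {i : ℕ} (hi : i ≤ n) {s : Fin i → σ} (hs : ∀ j, s j ∈ D (Fin.castLE hi j))
include hs

theorem preMin_le_cost : A.preMin D i hi (A.run A.q0 (List.ofFn s)) ≤ A.cost A.q0 (List.ofFn s) :=
  sInf_le ⟨s, hs, rfl, rfl⟩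

theorem preMin_ne_top : A.preMin D i hi (A.run A.q0 (List.ofFn s)) ≠ ⊤ :=
  ne_top_of_le_ne_top (ENat.natCast_ne_top _) (A.preMin_le_cost D hi hs)

theorem cost_le_preMax : (A.cost A.q0 (List.ofFn s) : WithBot ℕ) ≤
    A.preMax D i hi (A.run A.q0 (List.ofFn s)) :=
  le_csSup (Set.finite_setOf_exists_forall_mem_finset _ _ _).bddAbove ⟨s, hs, rfl, rfl⟩

end Prefix

section Suffix

variable {i : ℕ} (q : Q) {s : Fin (n - i) → σ}
  (hs : ∀ j : Fin (n - i), s j ∈ D ⟨i + j.val, by have := j.isLt; omega⟩)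
include hs

theorem sufMin_le_cost : A.sufMin D i q ≤ A.cost q (List.ofFn s) :=
  Nat.sInf_le ⟨s, hs, rfl⟩

theorem cost_le_sufMax : A.cost q (List.ofFn s) ≤ A.sufMax D i q := by
  refine le_csSup ((Set.finite_setOf_exists_forall_mem_finset (P := fun _ => True)
    (fun j : Fin (n - i) => D ⟨i + j.val, by have := j.isLt; omega⟩)
    (A.cost q ∘ List.ofFn)).subset ?_).bddAbove ⟨s, hs, rfl⟩
  exact fun _ ⟨s', hs', hc⟩ => ⟨s', hs', trivial, hc⟩

end Suffix

variable {s : Fin n → σ} (hs : ∀ j, s j ∈ D j) (i : Fin n)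
include hs

theorem preMin_add_sufMin_le_cost :
    let q := A.run A.q0 (List.ofFn fun j : Fin i.val => s (Fin.castLE i.isLt.le j))
    A.preMin D i.val i.isLt.le q + ((A.δ q (s i)).2 : ℕ∞) +
        (A.sufMin D (i.val + 1) (A.δ q (s i)).1 : ℕ∞) ≤ (A.cost A.q0 (List.ofFn s) : ℕ∞) := by
  rw [List.ofFn_eq_append_cons s i, cost_append_cons, ← add_assoc]
  push_cast
  gcongr
  · exact A.preMin_le_cost D i.isLt.le fun j => hs _
  · exact_mod_cast A.sufMin_le_cost D _ fun j => hs _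

theorem cost_le_preMax_add_sufMax :
    let q := A.run A.q0 (List.ofFn fun j : Fin i.val => s (Fin.castLE i.isLt.le j))
    ((A.cost A.q0 (List.ofFn s) : ℕ) : WithBot ℕ) ≤
      A.preMax D i.val i.isLt.le q + ((A.δ q (s i)).2 : WithBot ℕ) +
        (A.sufMax D (i.val + 1) (A.δ q (s i)).1 : WithBot ℕ) := by
  rw [List.ofFn_eq_append_cons s i, cost_append_cons, ← add_assoc]
  push_cast
  gcongr
  · exact A.cost_le_preMax D i.isLt.le fun j => hs _
  · exact_mod_cast A.cost_le_sufMax D _ fun j => hs _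

end CDFA

theorem cAutomaton_pruning_sound_general {Q σ : Type*}
    (A : CDFA Q σ) {n : ℕ} (D : Fin n → Finset σ)
    (DN : Finset ℕ) (i : Fin n) (ℓ : σ) :
    (∀ s : Fin n → σ, (∀ j, s j ∈ D j) → s i = ℓ →
      ∀ q : Q, A.run A.q0 (List.ofFn fun j : Fin i.val => s (Fin.castLE i.isLt.le j)) = q →
        A.preMin D i.val i.isLt.le q + ((A.δ q ℓ).2 : ℕ∞) +
            (A.sufMin D (i.val + 1) (A.δ q ℓ).1 : ℕ∞) ≤ (A.cost A.q0 (List.ofFn s) : ℕ∞) ∧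
        ((A.cost A.q0 (List.ofFn s) : ℕ) : WithBot ℕ) ≤
          A.preMax D i.val i.isLt.le q + ((A.δ q ℓ).2 : WithBot ℕ) +
            (A.sufMax D (i.val + 1) (A.δ q ℓ).1 : WithBot ℕ)) ∧
    ((∀ q : Q, A.preMin D i.val i.isLt.le q ≠ ⊤ →
        ∀ v ∈ DN,
          ¬ (A.preMin D i.val i.isLt.le q + ((A.δ q ℓ).2 : ℕ∞) +
                (A.sufMin D (i.val + 1) (A.δ q ℓ).1 : ℕ∞) ≤ (v : ℕ∞) ∧
             ((v : ℕ) : WithBot ℕ) ≤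
               A.preMax D i.val i.isLt.le q + ((A.δ q ℓ).2 : WithBot ℕ) +
                 (A.sufMax D (i.val + 1) (A.δ q ℓ).1 : WithBot ℕ))) →
      ∀ s : Fin n → σ, (∀ j, s j ∈ D j) → s i = ℓ →
        A.cost A.q0 (List.ofFn s) ∉ DN) := by
  refine ⟨fun s hs hsi q hq => ?_, fun disjoint s hs hsi hmem => ?_⟩
  · subst hsi hq
    exact ⟨A.preMin_add_sufMin_le_cost D hs i, A.cost_le_preMax_add_sufMax D hs i⟩
  · subst hsi
    exact disjoint _ (A.preMin_ne_top D i.isLt.le fun j => hs _) _ hmem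
      ⟨A.preMin_add_sufMin_le_cost D hs i, A.cost_le_preMax_add_sufMax D hs i⟩

/-- Soundness of the pruning rule of the incomplete `cAutomaton` propagator: the cost
of any domain-consistent string whose `i`-th symbol is `ℓ` lies in the interval
`[preMin(i−1,q) + inc + sufMin(i+1,q′), preMax(i−1,q) + inc + sufMax(i+1,q′)]` where
`q` is the state reached on its prefix and `δ(q,ℓ) = (q′,inc)`; consequently, if for
every state `q` with `preMin(i−1,q) ≠ ∞` this interval is disjoint from `D_N`, then no
such string has its cost in `D_N`. -/
theorem cAutomaton_pruning_sound {Q σ : Type*} [Fintype Q] [Fintype σ]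
    (A : CDFA Q σ) {n : ℕ} (D : Fin n → Finset σ) (hD : ∀ j, (D j).Nonempty)
    (DN : Finset ℕ) (i : Fin n) (ℓ : σ) (hℓ : ℓ ∈ D i) :
    (∀ s : Fin n → σ, (∀ j, s j ∈ D j) → s i = ℓ →
      ∀ q : Q, A.run A.q0 (List.ofFn fun j : Fin i.val => s (Fin.castLE i.isLt.le j)) = q →
        A.preMin D i.val i.isLt.le q + ((A.δ q ℓ).2 : ℕ∞) +
            (A.sufMin D (i.val + 1) (A.δ q ℓ).1 : ℕ∞) ≤ (A.cost A.q0 (List.ofFn s) : ℕ∞) ∧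
        ((A.cost A.q0 (List.ofFn s) : ℕ) : WithBot ℕ) ≤
          A.preMax D i.val i.isLt.le q + ((A.δ q ℓ).2 : WithBot ℕ) +
            (A.sufMax D (i.val + 1) (A.δ q ℓ).1 : WithBot ℕ)) ∧
    ((∀ q : Q, A.preMin D i.val i.isLt.le q ≠ ⊤ →
        ∀ v ∈ DN,
          ¬ (A.preMin D i.val i.isLt.le q + ((A.δ q ℓ).2 : ℕ∞) +
                (A.sufMin D (i.val + 1) (A.δ q ℓ).1 : ℕ∞) ≤ (v : ℕ∞) ∧
             ((v : ℕ) : WithBot ℕ) ≤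
               A.preMax D i.val i.isLt.le q + ((A.δ q ℓ).2 : WithBot ℕ) +
                 (A.sufMax D (i.val + 1) (A.δ q ℓ).1 : WithBot ℕ))) →
      ∀ s : Fin n → σ, (∀ j, s j ∈ D j) → s i = ℓ →
        A.cost A.q0 (List.ofFn s) ∉ DN) :=
  cAutomaton_pruning_sound_general A D DN i ℓ
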